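/- Fix δ ∈ (0,1) and smooth functions φ₀, φ₁, φ₂ on [0,1] × S¹. Let (h, v¹, v²) be a C² solution, with h > 0, of the 2D rotating shallow water system B h = −h div v, B v¹ = v² − ∂₁h, B v² = −v¹ − ∂₂h on an open neighborhood of {0} × (1−δ, 1) × S¹ in ℝ_t × ℝ × S¹, whose data at t = 0 are ρ(0,x₁,x₂) = δφ₀(s,θ), v¹(0,x₁,x₂) = δφ₁(s,θ), v²(0,x₁,x₂) = δ²φ₂(s,θ), where ρ = ln h, s = (1−x₁)/δ, θ = x₂. Set η = √h = e^{ρ/2}, ξ = (1 + ∂₁v² − ∂₂v¹) e^{−ρ}, and L_f = ∂_t + (v¹ + η)∂₁ + v²∂₂. Then at every point of {0} × (1−δ,1) × S¹: L_f ρ = ∂_s φ₁ − η ∂_s φ₀ − δ² ∂_θ φ₂; L_f v¹ = −η ∂_s φ₁ + e^{δφ₀} ∂_s φ₀ + δ² φ₂; and L_f ξ = η e^{−δφ₀} ( ∂_s∂_θ φ₁ + ∂_s φ₀ + ∂_s² φ₂ − δ ∂_s φ₀ (∂_s φ₂ + ∂_θ φ₁) ), all profile derivatives being evaluated at (s, θ)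 = ((1−x₁)/δ, x₂). -/

import Mathlib

/-- Partial derivative in the `i`-th coordinate direction of spacetime
`ℝ_t × ℝ²_x ≃ (Fin 3 → ℝ)`, coordinates `(x⁰, x¹, x²) = (t, x₁, x₂)`. -/
noncomputable def pd (i : Fin 3) (f : (Fin 3 → ℝ) → ℝ) (x : Fin 3 → ℝ) : ℝ :=
  fderiv ℝ f x (Pi.single i 1)

/-- Material derivative `B = ∂ₜ + v¹∂₁ + v²∂₂`. -/
noncomputable def matD (v1 v2 f : (Fin 3 → ℝ) → ℝ) (x : Fin 3 → ℝ) : ℝ :=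
  pd 0 f x + v1 x * pd 1 f x + v2 x * pd 2 f x

/-- `L_f = ∂ₜ + (v¹ + η)∂₁ + v²∂₂`, the derivative along the flat outgoing null
direction, with `η = √h`. -/
noncomputable def Lf (h v1 v2 f : (Fin 3 → ℝ) → ℝ) (x : Fin 3 → ℝ) : ℝ :=
  pd 0 f x + (v1 x + Real.sqrt (h x)) * pd 1 f x + v2 x * pd 2 f x

/-!
Write `L_f = B + η ∂₁`. On `t = 0` every spatial derivative of `ρ`, `v¹`, `v²` is read off from
the data by the chain rule in `s = (1 - x₁)/δ`, each `∂₁` costing a factor `-1/δ`, so only the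
material derivatives need the equations: mass conservation gives `Bρ = -div v`, the first
momentum equation gives `Bv¹ = v² - e^ρ ∂₁ρ`, and the potential vorticity is materially
conserved: the vorticity equation reads `Bω = -(1 + ω) div v` (the pressure terms cancel by
symmetry of the second derivatives of `h`), so `Bξ = (Bω - (1 + ω) Bρ) e^{-ρ} = 0`.
Hence `L_f ξ = η ∂₁ξ` at `t = 0`.
-/

open Filter Topology

section PartialDerivative

variable {f g : (Fin 3 → ℝ) → ℝ} {p : Fin 3 → ℝ} {i : Fin 3}

lemma pd_congr (hfg : f =ᶠ[𝓝 p] g) : pd i f p = pd i g p := by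
  rw [pd, pd, hfg.fderiv_eq]

lemma pd_add (hf : DifferentiableAt ℝ f p) (hg : DifferentiableAt ℝ g p) :
    pd i (fun y => f y + g y) p = pd i f p + pd i g p := by
  simp [pd, fderiv_fun_add hf hg]

lemma pd_sub (hf : DifferentiableAt ℝ f p) (hg : DifferentiableAt ℝ g p) :
    pd i (fun y => f y - g y) p = pd i f p - pd i g p := by
  simp [pd, fderiv_fun_sub hf hg]

lemma pd_neg : pd i (fun y => -f y) p = -pd i f p := by
  simp [pd]

lemma pd_const_add (c : ℝ) : pd i (fun y => c + f y) p = pd i f p := by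
  simp [pd]

lemma pd_mul (hf : DifferentiableAt ℝ f p) (hg : DifferentiableAt ℝ g p) :
    pd i (fun y => f y * g y) p = pd i f p * g p + f p * pd i g p := by
  simp only [pd, fderiv_fun_mul hf hg, add_apply, smul_apply, smul_eq_mul]
  ring

lemma pd_exp (hf : DifferentiableAt ℝ f p) :
    pd i (fun y => Real.exp (f y)) p = Real.exp (f p) * pd i f p := by
  simp [pd, hf.hasFDerivAt.exp.fderiv]

lemma pd_log (hf : DifferentiableAt ℝ f p) (hfp : f p ≠ 0) :
    pd i (fun y => Real.log (f y)) p = pd i f p / f p := by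
  simp only [pd, (hf.hasFDerivAt.log hfp).fderiv, smul_apply, smul_eq_mul]
  ring

lemma differentiableAt_pd (hf : ContDiffAt ℝ 2 f p) (j : Fin 3) :
    DifferentiableAt ℝ (pd j f) p :=
  ((hf.fderiv_right (m := 1) (by norm_num)).differentiableAt one_ne_zero).clm_apply
    (differentiableAt_const _)

lemma pd_pd_eq_fderiv_fderiv (hf : ContDiffAt ℝ 2 f p) (i j : Fin 3) :
    pd i (pd j f) p = fderiv ℝ (fderiv ℝ f) p (Pi.single i 1) (Pi.single j 1) := by
  have hf' := (hf.fderiv_right (m := 1) (by norm_num)).differentiableAt one_ne_zero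
  rw [pd, show pd j f = fun x => fderiv ℝ f x (Pi.single j 1) from rfl,
    fderiv_clm_apply hf' (differentiableAt_const _)]
  simp

lemma pd_comm (hf : ContDiffAt ℝ 2 f p) (i j : Fin 3) :
    pd i (pd j f) p = pd j (pd i f) p := by
  rw [pd_pd_eq_fderiv_fderiv hf, pd_pd_eq_fderiv_fderiv hf, hf.isSymmSndFDerivAt (by simp)]

lemma hasDerivAt_pd (hf : DifferentiableAt ℝ f p) (i : Fin 3) :
    HasDerivAt (fun y => f (Function.update p i y)) (pd i f p) (p i) := by
  have hf' : HasFDerivAt f (fderiv ℝ f p) (Function.update p i (p i)) := by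
    simpa using hf.hasFDerivAt
  exact hf'.comp_hasDerivAt (p i) (hasDerivAt_update p i (p i))

lemma ContDiffOn.pd {U : Set (Fin 3 → ℝ)} {m n : WithTop ℕ∞} (hf : ContDiffOn ℝ n f U)
    (hU : IsOpen U) (hmn : m + 1 ≤ n) (j : Fin 3) : ContDiffOn ℝ m (pd j f) U :=
  (hf.fderiv_of_isOpen hU hmn).clm_apply contDiffOn_const

end PartialDerivative

lemma update_vec₃_one (a b c y : ℝ) : Function.update ![a, b, c] 1 y = ![a, y, c] := by
  ext k; fin_cases k <;> simp

lemma update_vec₃_two (a b c y : ℝ) : Function.update ![a, b, c] 2 y = ![a, b, y] := by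
  ext k; fin_cases k <;> simp

section MaterialDerivative

variable {v1 v2 f g : (Fin 3 → ℝ) → ℝ} {p : Fin 3 → ℝ}

lemma Lf_eq_matD_add (h : (Fin 3 → ℝ) → ℝ) (x : Fin 3 → ℝ) :
    Lf h v1 v2 f x = matD v1 v2 f x + Real.sqrt (h x) * pd 1 f x := by
  simp only [Lf, matD]; ring

lemma matD_sub (hf : DifferentiableAt ℝ f p) (hg : DifferentiableAt ℝ g p) :
    matD v1 v2 (fun y => f y - g y) p = matD v1 v2 f p - matD v1 v2 g p := by
  simp only [matD, pd_sub hf hg]; ring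

lemma matD_log (hf : DifferentiableAt ℝ f p) (hfp : f p ≠ 0) :
    matD v1 v2 (fun y => Real.log (f y)) p = matD v1 v2 f p / f p := by
  simp only [matD, pd_log hf hfp]; ring

lemma pd_matD (hf : ContDiffAt ℝ 2 f p) (hv1 : DifferentiableAt ℝ v1 p)
    (hv2 : DifferentiableAt ℝ v2 p) (i : Fin 3) :
    pd i (matD v1 v2 f) p
      = matD v1 v2 (pd i f) p + pd i v1 p * pd 1 f p + pd i v2 p * pd 2 f p := by
  have hd := differentiableAt_pd hf
  rw [show matD v1 v2 f = fun x => pd 0 f x + v1 x * pd 1 f x + v2 x * pd 2 f x from rfl,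
    pd_add ((hd 0).fun_add (hv1.fun_mul (hd 1))) (hv2.fun_mul (hd 2)),
    pd_add (hd 0) (hv1.fun_mul (hd 1)),
    pd_mul hv1 (hd 1), pd_mul hv2 (hd 2), pd_comm hf i 0, pd_comm hf i 1, pd_comm hf i 2]
  simp only [matD]; ring

end MaterialDerivative

noncomputable def vorticity (v1 v2 : (Fin 3 → ℝ) → ℝ) : (Fin 3 → ℝ) → ℝ :=
  fun y => pd 1 v2 y - pd 2 v1 y

noncomputable def potentialVorticity (h v1 v2 : (Fin 3 → ℝ) → ℝ) : (Fin 3 → ℝ) → ℝ :=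
  fun y => (1 + pd 1 v2 y - pd 2 v1 y) * Real.exp (-(Real.log (h y)))

lemma pd_potentialVorticity {h v1 v2 : (Fin 3 → ℝ) → ℝ} {p : Fin 3 → ℝ}
    (hh : DifferentiableAt ℝ h p) (hhp : h p ≠ 0) (hv1 : DifferentiableAt ℝ (pd 2 v1) p)
    (hv2 : DifferentiableAt ℝ (pd 1 v2) p) (i : Fin 3) :
    pd i (potentialVorticity h v1 v2) p
      = (pd i (vorticity v1 v2) p - (1 + vorticity v1 v2 p) * pd i (fun y => Real.log (h y)) p)
        * Real.exp (-Real.log (h p)) := by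
  have hξ : potentialVorticity h v1 v2
      = fun y => (1 + vorticity v1 v2 y) * Real.exp (-Real.log (h y)) := by
    funext y; simp only [potentialVorticity, vorticity]; ring
  have hρ := hh.log hhp
  have hω : DifferentiableAt ℝ (vorticity v1 v2) p := hv2.fun_sub hv1
  rw [hξ, pd_mul (hω.const_add 1) hρ.fun_neg.exp, pd_const_add,
    pd_exp hρ.fun_neg, pd_neg]
  ring

structure IsRotatingShallowWater (U : Set (Fin 3 → ℝ)) (h v1 v2 : (Fin 3 → ℝ) → ℝ) : Prop where
  isOpen : IsOpen U
  contDiffOn_h : ContDiffOn ℝ 2 h U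
  contDiffOn_v1 : ContDiffOn ℝ 2 v1 U
  contDiffOn_v2 : ContDiffOn ℝ 2 v2 U
  pos : ∀ x ∈ U, 0 < h x
  mass : ∀ x ∈ U, matD v1 v2 h x = -(h x) * (pd 1 v1 x + pd 2 v2 x)
  mom1 : ∀ x ∈ U, matD v1 v2 v1 x = v2 x - pd 1 h x
  mom2 : ∀ x ∈ U, matD v1 v2 v2 x = -v1 x - pd 2 h x

namespace IsRotatingShallowWater

variable {U : Set (Fin 3 → ℝ)} {h v1 v2 : (Fin 3 → ℝ) → ℝ} {p : Fin 3 → ℝ}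

lemma contDiffAt_h (hs : IsRotatingShallowWater U h v1 v2) (hp : p ∈ U) : ContDiffAt ℝ 2 h p :=
  hs.contDiffOn_h.contDiffAt (hs.isOpen.mem_nhds hp)

lemma contDiffAt_v1 (hs : IsRotatingShallowWater U h v1 v2) (hp : p ∈ U) : ContDiffAt ℝ 2 v1 p :=
  hs.contDiffOn_v1.contDiffAt (hs.isOpen.mem_nhds hp)

lemma contDiffAt_v2 (hs : IsRotatingShallowWater U h v1 v2) (hp : p ∈ U) : ContDiffAt ℝ 2 v2 p :=
  hs.contDiffOn_v2.contDiffAt (hs.isOpen.mem_nhds hp)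

lemma matD_log_h (hs : IsRotatingShallowWater U h v1 v2) (hp : p ∈ U) :
    matD v1 v2 (fun y => Real.log (h y)) p = -(pd 1 v1 p + pd 2 v2 p) := by
  have hhp := (hs.pos p hp).ne'
  rw [matD_log ((hs.contDiffAt_h hp).differentiableAt two_ne_zero) hhp, hs.mass p hp]
  field_simp

/-- Vorticity equation: the Coriolis term adds the planetary vorticity `1` to `ω`. -/
lemma matD_vorticity (hs : IsRotatingShallowWater U h v1 v2) (hp : p ∈ U) :
    matD v1 v2 (vorticity v1 v2) p = -((1 + vorticity v1 v2 p) * (pd 1 v1 p + pd 2 v2 p)) := by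
  have hh := hs.contDiffAt_h hp
  have hv1 := hs.contDiffAt_v1 hp
  have hv2 := hs.contDiffAt_v2 hp
  have dv1 := hv1.differentiableAt two_ne_zero
  have dv2 := hv2.differentiableAt two_ne_zero
  have hU := hs.isOpen.mem_nhds hp
  have hmom1 : pd 2 (matD v1 v2 v1) p = pd 2 v2 p - pd 2 (pd 1 h) p := by
    rw [pd_congr (eventuallyEq_of_mem hU (g := fun x => v2 x - pd 1 h x) hs.mom1),
      pd_sub dv2 (differentiableAt_pd hh 1)]
  have hmom2 : pd 1 (matD v1 v2 v2) p = -pd 1 v1 p - pd 1 (pd 2 h) p := by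
    rw [pd_congr (eventuallyEq_of_mem hU (g := fun x => -v1 x - pd 2 h x) hs.mom2),
      pd_sub dv1.fun_neg (differentiableAt_pd hh 2), pd_neg]
  have hω : matD v1 v2 (vorticity v1 v2) p = matD v1 v2 (pd 1 v2) p - matD v1 v2 (pd 2 v1) p :=
    matD_sub (differentiableAt_pd hv2 1) (differentiableAt_pd hv1 2)
  rw [hω, vorticity]
  linear_combination hmom2 - hmom1 - pd_matD hv2 dv1 dv2 1 + pd_matD hv1 dv1 dv2 2
    - pd_comm hh 1 2

lemma matD_potentialVorticity (hs : IsRotatingShallowWater U h v1 v2) (hp : p ∈ U) :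
    matD v1 v2 (potentialVorticity h v1 v2) p = 0 := by
  have hξ := pd_potentialVorticity ((hs.contDiffAt_h hp).differentiableAt two_ne_zero)
    (hs.pos p hp).ne' (differentiableAt_pd (hs.contDiffAt_v1 hp) 2)
    (differentiableAt_pd (hs.contDiffAt_v2 hp) 1)
  have hsplit : matD v1 v2 (potentialVorticity h v1 v2) p
      = (matD v1 v2 (vorticity v1 v2) p
          - (1 + vorticity v1 v2 p) * matD v1 v2 (fun y => Real.log (h y)) p)
        * Real.exp (-Real.log (h p)) := by
    simp only [matD, hξ]; ring
  rw [hsplit, hs.matD_vorticity hp, hs.matD_log_h hp]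
  ring

lemma Lf_log_h (hs : IsRotatingShallowWater U h v1 v2) (hp : p ∈ U) :
    Lf h v1 v2 (fun y => Real.log (h y)) p
      = -(pd 1 v1 p + pd 2 v2 p) + Real.sqrt (h p) * pd 1 (fun y => Real.log (h y)) p := by
  rw [Lf_eq_matD_add, hs.matD_log_h hp]

lemma Lf_v1 (hs : IsRotatingShallowWater U h v1 v2) (hp : p ∈ U) :
    Lf h v1 v2 v1 p
      = v2 p - h p * pd 1 (fun y => Real.log (h y)) p + Real.sqrt (h p) * pd 1 v1 p := by
  have hhp := (hs.pos p hp).ne'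
  rw [Lf_eq_matD_add, hs.mom1 p hp,
    pd_log ((hs.contDiffAt_h hp).differentiableAt two_ne_zero) hhp]
  field_simp

lemma Lf_potentialVorticity (hs : IsRotatingShallowWater U h v1 v2) (hp : p ∈ U) :
    Lf h v1 v2 (potentialVorticity h v1 v2) p
      = Real.sqrt (h p) * Real.exp (-Real.log (h p))
        * (pd 1 (pd 1 v2) p - pd 1 (pd 2 v1) p
          - (1 + pd 1 v2 p - pd 2 v1 p) * pd 1 (fun y => Real.log (h y)) p) := by
  have dv1 := differentiableAt_pd (hs.contDiffAt_v1 hp) 2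
  have dv2 := differentiableAt_pd (hs.contDiffAt_v2 hp) 1
  have hω : pd 1 (vorticity v1 v2) p = pd 1 (pd 1 v2) p - pd 1 (pd 2 v1) p := pd_sub dv2 dv1
  rw [Lf_eq_matD_add, hs.matD_potentialVorticity hp,
    pd_potentialVorticity ((hs.contDiffAt_h hp).differentiableAt two_ne_zero)
      (hs.pos p hp).ne' dv1 dv2, hω, vorticity]
  ring

end IsRotatingShallowWater

section Profile

open Function

variable {φ : ℝ → ℝ → ℝ} {V : Set (ℝ × ℝ)} {s θ : ℝ}

lemma ContDiffOn.hasDerivAt_partial_fst (hφ : ContDiffOn ℝ (⊤ : ℕ∞) (uncurry φ) V)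
    (hV : IsOpen V) (hsθ : (s, θ) ∈ V) :
    HasDerivAt (fun s' => φ s' θ) (fderiv ℝ (uncurry φ) (s, θ) (1, 0)) s := by
  have hd := (hφ.contDiffAt (hV.mem_nhds hsθ)).differentiableAt (by simp)
  exact hd.hasFDerivAt.comp_hasDerivAt s ((hasDerivAt_id s).prodMk (hasDerivAt_const s θ))

lemma ContDiffOn.hasDerivAt_partial_snd (hφ : ContDiffOn ℝ (⊤ : ℕ∞) (uncurry φ) V)
    (hV : IsOpen V) (hsθ : (s, θ) ∈ V) :
    HasDerivAt (fun θ' => φ s θ') (fderiv ℝ (uncurry φ) (s, θ) (0, 1)) θ := by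
  have hd := (hφ.contDiffAt (hV.mem_nhds hsθ)).differentiableAt (by simp)
  exact hd.hasFDerivAt.comp_hasDerivAt θ ((hasDerivAt_const θ s).prodMk (hasDerivAt_id θ))

lemma ContDiffOn.partial_fst (hφ : ContDiffOn ℝ (⊤ : ℕ∞) (uncurry φ) V) (hV : IsOpen V) :
    ContDiffOn ℝ (⊤ : ℕ∞) (uncurry fun s θ => deriv (fun s' => φ s' θ) s) V :=
  ((hφ.fderiv_of_isOpen hV (by simp)).clm_apply contDiffOn_const).congr fun _ hq =>
    (hφ.hasDerivAt_partial_fst hV hq).deriv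

lemma ContDiffOn.partial_snd (hφ : ContDiffOn ℝ (⊤ : ℕ∞) (uncurry φ) V) (hV : IsOpen V) :
    ContDiffOn ℝ (⊤ : ℕ∞) (uncurry fun s θ => deriv (fun θ' => φ s θ') θ) V :=
  ((hφ.fderiv_of_isOpen hV (by simp)).clm_apply contDiffOn_const).congr fun _ hq =>
    (hφ.hasDerivAt_partial_snd hV hq).deriv

end Profile

def IsPulseData (δ c : ℝ) (φ : ℝ → ℝ → ℝ) (f : (Fin 3 → ℝ) → ℝ) : Prop :=
  ∀ x₁ ∈ Set.Ioo (1 - δ) 1, ∀ x₂ : ℝ, f ![0, x₁, x₂] = c * φ ((1 - x₁) / δ) x₂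

lemma one_sub_div_mem_Ioo {δ x : ℝ} (hδ : 0 < δ) (hx : x ∈ Set.Ioo (1 - δ) 1) :
    (1 - x) / δ ∈ Set.Ioo (0 : ℝ) 1 :=
  ⟨div_pos (by linarith [hx.2]) hδ, (div_lt_one hδ).2 (by linarith [hx.1])⟩

namespace IsPulseData

variable {δ c : ℝ} {φ : ℝ → ℝ → ℝ} {f : (Fin 3 → ℝ) → ℝ}

lemma pd_one (hf : IsPulseData δ c φ f) (hδ : 0 < δ)
    (hφ : ContDiffOn ℝ (⊤ : ℕ∞) (Function.uncurry φ) (Set.Ioo 0 1 ×ˢ Set.univ))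
    (hdiff : ∀ x₁ ∈ Set.Ioo (1 - δ) 1, ∀ x₂ : ℝ, DifferentiableAt ℝ f ![0, x₁, x₂]) :
    IsPulseData δ (-(c / δ)) (fun s θ => deriv (fun s' => φ s' θ) s) (pd 1 f) := by
  intro x₁ hx₁ x₂
  have hline := hasDerivAt_pd (hdiff x₁ hx₁ x₂) 1
  simp only [update_vec₃_one, Matrix.cons_val_one, Matrix.cons_val_zero] at hline
  have hφs := (hφ.hasDerivAt_partial_fst (isOpen_Ioo.prod isOpen_univ)
    ⟨one_sub_div_mem_Ioo hδ hx₁, Set.mem_univ x₂⟩).differentiableAt.hasDerivAt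
  have hprofile : HasDerivAt (fun y => c * φ ((1 - y) / δ) x₂)
      (-(c / δ) * deriv (fun s' => φ s' x₂) ((1 - x₁) / δ)) x₁ := by
    refine ((hφs.comp x₁ (((hasDerivAt_id x₁).const_sub 1).div_const δ)).const_mul c).congr_deriv ?_
    ring
  have heq : (fun y => f ![0, y, x₂]) =ᶠ[𝓝 x₁] fun y => c * φ ((1 - y) / δ) x₂ :=
    eventually_of_mem (isOpen_Ioo.mem_nhds hx₁) fun y hy => hf y hy x₂
  exact hline.unique (hprofile.congr_of_eventuallyEq heq)

lemma pd_two (hf : IsPulseData δ c φ f) (hδ : 0 < δ)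
    (hφ : ContDiffOn ℝ (⊤ : ℕ∞) (Function.uncurry φ) (Set.Ioo 0 1 ×ˢ Set.univ))
    (hdiff : ∀ x₁ ∈ Set.Ioo (1 - δ) 1, ∀ x₂ : ℝ, DifferentiableAt ℝ f ![0, x₁, x₂]) :
    IsPulseData δ c (fun s θ => deriv (fun θ' => φ s θ') θ) (pd 2 f) := by
  intro x₁ hx₁ x₂
  have hline := hasDerivAt_pd (hdiff x₁ hx₁ x₂) 2
  simp only [update_vec₃_two, Matrix.cons_val, funext (hf x₁ hx₁)] at hline
  exact hline.unique ((hφ.hasDerivAt_partial_snd (isOpen_Ioo.prod isOpen_univ)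
    ⟨one_sub_div_mem_Ioo hδ hx₁, Set.mem_univ x₂⟩).differentiableAt.hasDerivAt.const_mul c)

end IsPulseData

theorem short_pulse_data_null_derivatives_general
    (δ : ℝ) (hδ0 : 0 < δ)
    (φ₀ φ₁ φ₂ : ℝ → ℝ → ℝ)
    (hφ₀ : ContDiffOn ℝ (⊤ : ℕ∞) (Function.uncurry φ₀) (Set.Icc 0 1 ×ˢ Set.univ))
    (hφ₁ : ContDiffOn ℝ (⊤ : ℕ∞) (Function.uncurry φ₁) (Set.Icc 0 1 ×ˢ Set.univ))
    (hφ₂ : ContDiffOn ℝ (⊤ : ℕ∞) (Function.uncurry φ₂) (Set.Icc 0 1 ×ˢ Set.univ))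
    (U : Set (Fin 3 → ℝ)) (hU : IsOpen U)
    (hsub : ∀ x₁ ∈ Set.Ioo (1 - δ) 1, ∀ x₂ : ℝ, (![0, x₁, x₂] : Fin 3 → ℝ) ∈ U)
    (h v1 v2 : (Fin 3 → ℝ) → ℝ)
    (hh : ContDiffOn ℝ 2 h U)
    (hv1 : ContDiffOn ℝ 2 v1 U) (hv2 : ContDiffOn ℝ 2 v2 U)
    (hpos : ∀ x ∈ U, 0 < h x)
    (hmass : ∀ x ∈ U, matD v1 v2 h x = -(h x) * (pd 1 v1 x + pd 2 v2 x))
    (hmom1 : ∀ x ∈ U, matD v1 v2 v1 x = v2 x - pd 1 h x)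
    (hmom2 : ∀ x ∈ U, matD v1 v2 v2 x = -v1 x - pd 2 h x)
    (hd0 : ∀ x₁ ∈ Set.Ioo (1 - δ) 1, ∀ x₂ : ℝ,
      Real.log (h ![0, x₁, x₂]) = δ * φ₀ ((1 - x₁) / δ) x₂)
    (hd1 : ∀ x₁ ∈ Set.Ioo (1 - δ) 1, ∀ x₂ : ℝ,
      v1 ![0, x₁, x₂] = δ * φ₁ ((1 - x₁) / δ) x₂)
    (hd2 : ∀ x₁ ∈ Set.Ioo (1 - δ) 1, ∀ x₂ : ℝ,
      v2 ![0, x₁, x₂] = δ ^ 2 * φ₂ ((1 - x₁) / δ) x₂) :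
    ∀ x₁ ∈ Set.Ioo (1 - δ) 1, ∀ x₂ : ℝ,
      (Lf h v1 v2 (fun y => Real.log (h y)) ![0, x₁, x₂]
        = deriv (fun s' => φ₁ s' x₂) ((1 - x₁) / δ)
          - Real.sqrt (h ![0, x₁, x₂]) * deriv (fun s' => φ₀ s' x₂) ((1 - x₁) / δ)
          - δ ^ 2 * deriv (fun θ' => φ₂ ((1 - x₁) / δ) θ') x₂) ∧
      (Lf h v1 v2 v1 ![0, x₁, x₂]
        = -Real.sqrt (h ![0, x₁, x₂]) * deriv (fun s' => φ₁ s' x₂) ((1 - x₁) / δ)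
          + Real.exp (δ * φ₀ ((1 - x₁) / δ) x₂) * deriv (fun s' => φ₀ s' x₂) ((1 - x₁) / δ)
          + δ ^ 2 * φ₂ ((1 - x₁) / δ) x₂) ∧
      (Lf h v1 v2
          (fun y => (1 + pd 1 v2 y - pd 2 v1 y) * Real.exp (-(Real.log (h y))))
          ![0, x₁, x₂]
        = Real.sqrt (h ![0, x₁, x₂]) * Real.exp (-(δ * φ₀ ((1 - x₁) / δ) x₂))
          * (deriv (fun s' => deriv (fun θ' => φ₁ s' θ') x₂) ((1 - x₁) / δ)
              + deriv (fun s' => φ₀ s' x₂) ((1 - x₁) / δ)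
              + deriv (fun s' => deriv (fun s'' => φ₂ s'' x₂) s') ((1 - x₁) / δ)
              - δ * deriv (fun s' => φ₀ s' x₂) ((1 - x₁) / δ)
                  * (deriv (fun s' => φ₂ s' x₂) ((1 - x₁) / δ)
                      + deriv (fun θ' => φ₁ ((1 - x₁) / δ) θ') x₂))) := by
  intro x₁ hx₁ x₂
  have hs : IsRotatingShallowWater U h v1 v2 := ⟨hU, hh, hv1, hv2, hpos, hmass, hmom1, hmom2⟩
  have hp := hsub x₁ hx₁ x₂
  have slab {g : (Fin 3 → ℝ) → ℝ} (hg : DifferentiableOn ℝ g U) :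
      ∀ y ∈ Set.Ioo (1 - δ) 1, ∀ z : ℝ, DifferentiableAt ℝ g ![0, y, z] :=
    fun y hy z => hg.differentiableAt (hU.mem_nhds (hsub y hy z))
  have hV : IsOpen (Set.Ioo (0 : ℝ) 1 ×ˢ (Set.univ : Set ℝ)) := isOpen_Ioo.prod isOpen_univ
  have hI : Set.Ioo (0 : ℝ) 1 ×ˢ (Set.univ : Set ℝ) ⊆ Set.Icc 0 1 ×ˢ Set.univ :=
    Set.prod_mono Set.Ioo_subset_Icc_self subset_rfl
  have hρ := (hh.differentiableOn two_ne_zero).log fun x hx => (hpos x hx).ne'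
  have dv1 := hv1.differentiableOn two_ne_zero
  have dv2 := hv2.differentiableOn two_ne_zero
  have ρ₁ := IsPulseData.pd_one (f := fun y => Real.log (h y)) hd0 hδ0 (hφ₀.mono hI) (slab hρ)
    x₁ hx₁ x₂
  have v1₁ := IsPulseData.pd_one hd1 hδ0 (hφ₁.mono hI) (slab dv1) x₁ hx₁ x₂
  have v1₂ := IsPulseData.pd_two hd1 hδ0 (hφ₁.mono hI) (slab dv1)
  have v1₂₁ := v1₂.pd_one hδ0 ((hφ₁.mono hI).partial_snd hV)
    (slab ((hv1.pd hU (by norm_num) 2).differentiableOn one_ne_zero)) x₁ hx₁ x₂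
  have v2₁ := IsPulseData.pd_one hd2 hδ0 (hφ₂.mono hI) (slab dv2)
  have v2₁₁ := v2₁.pd_one hδ0 ((hφ₂.mono hI).partial_fst hV)
    (slab ((hv2.pd hU (by norm_num) 1).differentiableOn one_ne_zero)) x₁ hx₁ x₂
  have v2₂ := IsPulseData.pd_two hd2 hδ0 (hφ₂.mono hI) (slab dv2) x₁ hx₁ x₂
  refine ⟨?_, ?_, ?_⟩
  · rw [hs.Lf_log_h hp, ρ₁, v1₁, v2₂]
    field_simp
    ring
  · rw [hs.Lf_v1 hp, ρ₁, v1₁, hd2 x₁ hx₁ x₂, ← Real.exp_log (hpos _ hp), hd0 x₁ hx₁ x₂]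
    field_simp
    ring
  · refine (hs.Lf_potentialVorticity hp).trans ?_
    rw [ρ₁, v1₂₁, v2₁₁, v2₁ x₁ hx₁ x₂, v1₂ x₁ hx₁ x₂, hd0 x₁ hx₁ x₂]
    field_simp
    ring

/-- For short pulse initial data `ρ(0,x₁,x₂) = δφ₀(s,θ)`, `v¹(0,x₁,x₂) = δφ₁(s,θ)`,
`v²(0,x₁,x₂) = δ²φ₂(s,θ)` (with `s = (1−x₁)/δ`, `θ = x₂`) of a solution of the 2D
rotating shallow water system, at every point of `{0} × (1−δ,1) × S¹`:
`L_f ρ = ∂ₛφ₁ − η∂ₛφ₀ − δ²∂_θφ₂`,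
`L_f v¹ = −η∂ₛφ₁ + e^{δφ₀}∂ₛφ₀ + δ²φ₂`, and
`L_f ξ = η e^{−δφ₀}(∂ₛ∂_θφ₁ + ∂ₛφ₀ + ∂ₛ²φ₂ − δ∂ₛφ₀(∂ₛφ₂ + ∂_θφ₁))`,
where `ξ = (1 + ∂₁v² − ∂₂v¹)e^{−ρ}` is the potential vorticity and `S¹ = ℝ/ℤ`. -/
theorem short_pulse_data_null_derivatives
    (δ : ℝ) (hδ0 : 0 < δ) (hδ1 : δ < 1)
    (φ₀ φ₁ φ₂ : ℝ → ℝ → ℝ)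
    (hφ₀ : ContDiffOn ℝ (⊤ : ℕ∞) (Function.uncurry φ₀) (Set.Icc 0 1 ×ˢ Set.univ))
    (hφ₁ : ContDiffOn ℝ (⊤ : ℕ∞) (Function.uncurry φ₁) (Set.Icc 0 1 ×ˢ Set.univ))
    (hφ₂ : ContDiffOn ℝ (⊤ : ℕ∞) (Function.uncurry φ₂) (Set.Icc 0 1 ×ˢ Set.univ))
    (hp₀ : ∀ s θ : ℝ, φ₀ s (θ + 1) = φ₀ s θ)
    (hp₁ : ∀ s θ : ℝ, φ₁ s (θ + 1) = φ₁ s θ)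
    (hp₂ : ∀ s θ : ℝ, φ₂ s (θ + 1) = φ₂ s θ)
    (U : Set (Fin 3 → ℝ)) (hU : IsOpen U)
    (hsub : ∀ x₁ ∈ Set.Ioo (1 - δ) 1, ∀ x₂ : ℝ, (![0, x₁, x₂] : Fin 3 → ℝ) ∈ U)
    (h v1 v2 : (Fin 3 → ℝ) → ℝ)
    (hh : ContDiffOn ℝ 2 h U)
    (hv1 : ContDiffOn ℝ 2 v1 U) (hv2 : ContDiffOn ℝ 2 v2 U)
    (hpos : ∀ x ∈ U, 0 < h x)
    (hmass : ∀ x ∈ U, matD v1 v2 h x = -(h x) * (pd 1 v1 x + pd 2 v2 x))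
    (hmom1 : ∀ x ∈ U, matD v1 v2 v1 x = v2 x - pd 1 h x)
    (hmom2 : ∀ x ∈ U, matD v1 v2 v2 x = -v1 x - pd 2 h x)
    (hd0 : ∀ x₁ ∈ Set.Ioo (1 - δ) 1, ∀ x₂ : ℝ,
      Real.log (h ![0, x₁, x₂]) = δ * φ₀ ((1 - x₁) / δ) x₂)
    (hd1 : ∀ x₁ ∈ Set.Ioo (1 - δ) 1, ∀ x₂ : ℝ,
      v1 ![0, x₁, x₂] = δ * φ₁ ((1 - x₁) / δ) x₂)
    (hd2 : ∀ x₁ ∈ Set.Ioo (1 - δ) 1, ∀ x₂ : ℝ,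
      v2 ![0, x₁, x₂] = δ ^ 2 * φ₂ ((1 - x₁) / δ) x₂) :
    ∀ x₁ ∈ Set.Ioo (1 - δ) 1, ∀ x₂ : ℝ,
      (Lf h v1 v2 (fun y => Real.log (h y)) ![0, x₁, x₂]
        = deriv (fun s' => φ₁ s' x₂) ((1 - x₁) / δ)
          - Real.sqrt (h ![0, x₁, x₂]) * deriv (fun s' => φ₀ s' x₂) ((1 - x₁) / δ)
          - δ ^ 2 * deriv (fun θ' => φ₂ ((1 - x₁) / δ) θ') x₂) ∧
      (Lf h v1 v2 v1 ![0, x₁, x₂]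
        = -Real.sqrt (h ![0, x₁, x₂]) * deriv (fun s' => φ₁ s' x₂) ((1 - x₁) / δ)
          + Real.exp (δ * φ₀ ((1 - x₁) / δ) x₂) * deriv (fun s' => φ₀ s' x₂) ((1 - x₁) / δ)
          + δ ^ 2 * φ₂ ((1 - x₁) / δ) x₂) ∧
      (Lf h v1 v2
          (fun y => (1 + pd 1 v2 y - pd 2 v1 y) * Real.exp (-(Real.log (h y))))
          ![0, x₁, x₂]
        = Real.sqrt (h ![0, x₁, x₂]) * Real.exp (-(δ * φ₀ ((1 - x₁) / δ) x₂))
          * (deriv (fun s' => deriv (fun θ' => φ₁ s' θ') x₂) ((1 - x₁) / δ)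
              + deriv (fun s' => φ₀ s' x₂) ((1 - x₁) / δ)
              + deriv (fun s' => deriv (fun s'' => φ₂ s'' x₂) s') ((1 - x₁) / δ)
              - δ * deriv (fun s' => φ₀ s' x₂) ((1 - x₁) / δ)
                  * (deriv (fun s' => φ₂ s' x₂) ((1 - x₁) / δ)
                      + deriv (fun θ' => φ₁ ((1 - x₁) / δ) θ') x₂))) :=
  short_pulse_data_null_derivatives_general δ hδ0 φ₀ φ₁ φ₂ hφ₀ hφ₁ hφ₂ U hU hsub h v1 v2 hh hv1 hv2
    hpos hmass hmom1 hmom2 hd0 hd1 hd2
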